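/- Let $0<p<1$, $\mu>0$, $\sigma>0$, $\beta>0$, $l>0$, $0<k<r$, and suppose $\kappa\ge r$ where $\kappa:=\frac{\beta-p\left(\frac{\mu^2}{2\sigma^2(1-p)}+r\right)}{1-p}$. Suppose $v:(0,\infty)\to\mathbb{R}$ is three times continuously differentiable with $v''(y)>0$ and $v'(y)<-\frac{l}{r-k}$ for all $y>0$, solves the dual ODE $\beta\big(v(y)-y\,v'(y)\big)-\frac{\mu^2}{2\sigma^2}y^2 v''(y)-G\big(-k\,v'(y)+l,\;y\big)+r\,y\,v'(y)=0$ for all $y>0$, and there exists $y_2>0$ such that $v'(y)>-\frac{1}{k}y^{1/(p-1)}+\frac{l}{k}$ for all $y\in(0,y_2)$. Then there exists $y^*>0$ such that $v'(y)>-\frac{1}{k}y^{1/(p-1)}+\frac{l}{k}$ for all $y\in(0,y^*)$ and $v'(y)\le -\frac{1}{k}y^{1/(p-1)}+\frac{l}{k}$ for all $y\ge y^*$. -/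

import Mathlib

/-!
Let `h = v' - g` be the gap to the boundary curve `g y = -(1/k) y ^ (1/(p-1)) + l/k` and let `y*`
be the first point where `h ≤ 0` (one exists since `v' < -l/(r-k)`). If `h` became positive again
at some `c > y*`, it would attain a minimum `h y₀ ≤ 0` at an interior point `y₀ < c`. With
`u = -k v' + l`, the bound `G (u, y) ≥ u ^ p / p - u y` holds everywhere and is an equality where
the constraint binds, so the ODE minus this lower bound has a minimum at `y₀` and its derivative
vanishes there. Together with `h' y₀ = 0` and `h'' y₀ ≥ 0` this gives
`(κ - r) t + (r - k) t ≤ l r` for `t = y₀ ^ (1/(p-1))`, hence `(r - k) t ≤ l r`. But at the slack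
point `c`, `v' < -l/(r-k)` forces `(r - k) c ^ (1/(p-1)) > l r`, which contradicts `c > y₀`
because the exponent is negative.
-/

open Real Set

/-- `G p u y = sup_{c ≥ u} (c^p/p - c y)`. -/
noncomputable def G (p u y : ℝ) : ℝ :=
  sSup ((fun c : ℝ => c ^ p / p - c * y) '' {c : ℝ | u ≤ c})

open Filter Topology

lemma rpow_le_rpow_add_mul_sub {p a c : ℝ} (hp0 : 0 ≤ p) (hp1 : p ≤ 1) (ha : 0 < a)
    (hc : 0 ≤ c) : c ^ p ≤ a ^ p + p * a ^ (p - 1) * (c - a) := by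
  have amgm : c ^ p * a ^ (1 - p) ≤ p * c + (1 - p) * a :=
    geom_mean_le_arith_mean2_weighted hp0 (by linarith) hc ha.le (by ring)
  have hmul : a ^ (1 - p) * a ^ (p - 1) = 1 := by
    rw [← rpow_add ha]; norm_num
  have ha_pow : a * a ^ (p - 1) = a ^ p := by
    rw [rpow_sub_one ha.ne']; field_simp
  calc c ^ p = c ^ p * a ^ (1 - p) * a ^ (p - 1) := by rw [mul_assoc, hmul, mul_one]
    _ ≤ (p * c + (1 - p) * a) * a ^ (p - 1) :=
      mul_le_mul_of_nonneg_right amgm (rpow_nonneg ha.le _)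
    _ = a ^ p + p * a ^ (p - 1) * (c - a) := by rw [← ha_pow]; ring

lemma rpow_div_sub_mul_le {p a c y : ℝ} (hp0 : 0 < p) (hp1 : p ≤ 1) (ha : 0 < a)
    (hc : 0 ≤ c) : c ^ p / p - c * y ≤ a ^ p / p - a * y + (a ^ (p - 1) - y) * (c - a) := by
  have := rpow_le_rpow_add_mul_sub hp0.le hp1 ha hc
  rw [div_sub' hp0.ne', div_sub' hp0.ne', div_add' _ _ _ hp0.ne', div_le_div_iff_of_pos_right hp0]
  nlinarith

lemma G_bddAbove {p u y : ℝ} (hp0 : 0 < p) (hp1 : p < 1) (hu : 0 ≤ u) (hy : 0 < y) :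
    BddAbove ((fun c : ℝ => c ^ p / p - c * y) '' {c : ℝ | u ≤ c}) := by
  set a := y ^ (1 / (p - 1))
  have ha : 0 < a := rpow_pos_of_pos hy _
  have ha_pow : a ^ (p - 1) = y := by
    rw [← rpow_mul hy.le, one_div_mul_cancel (by linarith), rpow_one]
  refine ⟨a ^ p / p - a * y, ?_⟩
  rintro _ ⟨c, hc, rfl⟩
  simpa [ha_pow] using rpow_div_sub_mul_le hp0 hp1.le ha (hu.trans hc) (y := y)

lemma le_G {p u y : ℝ} (hp0 : 0 < p) (hp1 : p < 1) (hu : 0 ≤ u) (hy : 0 < y) :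
    u ^ p / p - u * y ≤ G p u y :=
  le_csSup (G_bddAbove hp0 hp1 hu hy) ⟨u, show u ≤ u from le_rfl, rfl⟩

lemma G_eq_of_rpow_sub_one_le {p u y : ℝ} (hp0 : 0 < p) (hp1 : p ≤ 1) (hu : 0 < u)
    (hb : u ^ (p - 1) ≤ y) : G p u y = u ^ p / p - u * y := by
  refine IsGreatest.csSup_eq ⟨⟨u, show u ≤ u from le_rfl, rfl⟩, ?_⟩
  rintro _ ⟨c, hc : u ≤ c, rfl⟩
  have := rpow_div_sub_mul_le hp0 hp1 hu (hu.le.trans hc) (y := y)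
  nlinarith

lemma ContDiffOn.hasDerivAt_deriv {f : ℝ → ℝ} {s : Set ℝ} {n : WithTop ℕ∞}
    (hf : ContDiffOn ℝ n f s) (hs : IsOpen s) (hn : n ≠ 0) {x : ℝ} (hx : x ∈ s) :
    HasDerivAt f (deriv f x) x :=
  ((hf.differentiableOn hn).differentiableAt (hs.mem_nhds hx)).hasDerivAt

lemma hasDerivAt_rpow_div_sub_mul {p y u' : ℝ} {u : ℝ → ℝ} (hp : p ≠ 0)
    (hu : HasDerivAt u u' y) (hpos : 0 < u y) :
    HasDerivAt (fun x => u x ^ p / p - u x * x) (u' * u y ^ (p - 1) - (u' * y + u y)) y :=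
  (((hu.rpow_const (Or.inl hpos.ne')).div_const p).sub (hu.mul (hasDerivAt_id y))).congr_deriv
    (by field_simp; simp)

theorem IsLocalMin.hasDerivAt_hasDerivAt_nonneg {f f' : ℝ → ℝ} {a d : ℝ} (h : IsLocalMin f a)
    (hf : ∀ᶠ x in 𝓝 a, HasDerivAt f (f' x) x) (hf' : HasDerivAt f' d a) : 0 ≤ d := by
  -- if `d < 0`, the sufficient second-derivative test makes `a` a local maximum as well,
  -- so `f` is constant near `a` and `d = 0`
  have hderiv : deriv f =ᶠ[𝓝 a] f' := hf.mono fun x hx => hx.deriv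
  by_contra! hd
  have hmax : IsLocalMax f a := by
    refine isLocalMax_of_deriv_deriv_neg ?_ (h.deriv_eq_zero) hf.self_of_nhds.continuousAt
    rwa [hderiv.deriv_eq, hf'.deriv]
  have hconst : f =ᶠ[𝓝 a] fun _ => f a := (h.and hmax).mono fun x hx => le_antisymm hx.2 hx.1
  have hzero : f' =ᶠ[𝓝 a] fun _ => 0 :=
    hderiv.symm.trans (hconst.deriv.trans (Eventually.of_forall fun _ => deriv_const _ _))
  exact hd.ne (by rw [← hf'.deriv, hzero.deriv_eq, deriv_const])

theorem exists_threshold_of_isLocalMin {h : ℝ → ℝ} {y₂ : ℝ} (hh : ContinuousOn h (Ioi 0))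
    (hy₂ : 0 < y₂) (hnear0 : ∀ y ∈ Ioo 0 y₂, 0 < h y) (hne : ∃ Y, 0 < Y ∧ h Y ≤ 0)
    (hmin : ∀ y₀ c, 0 < y₀ → y₀ < c → IsLocalMin h y₀ → h y₀ ≤ 0 → h c ≤ 0) :
    ∃ ystar, 0 < ystar ∧ (∀ y ∈ Ioo 0 ystar, 0 < h y) ∧ ∀ y, ystar ≤ y → h y ≤ 0 := by
  have hy₂_le : ∀ y, 0 < y → h y ≤ 0 → y₂ ≤ y := fun y hy hle =>
    not_lt.1 fun hlt => (hnear0 y ⟨hy, hlt⟩).not_ge hle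
  set S := Ici y₂ ∩ h ⁻¹' Iic 0
  have hS : S.Nonempty := by
    obtain ⟨Y, hY, hYh⟩ := hne
    exact ⟨Y, hy₂_le Y hY hYh, hYh⟩
  have hSbdd : BddBelow S := ⟨y₂, fun _ hx => hx.1⟩
  have hstar : sInf S ∈ S :=
    (hh.mono fun _ hx => hy₂.trans_le hx).preimage_isClosed_of_isClosed isClosed_Ici
      isClosed_Iic |>.csInf_mem hS hSbdd
  have hy₂_star : y₂ ≤ sInf S := hstar.1
  have hstar_pos : 0 < sInf S := hy₂.trans_le hy₂_star
  have hslack : ∀ y ∈ Ioo 0 (sInf S), 0 < h y := fun y hy => not_le.1 fun hle =>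
    (csInf_le hSbdd ⟨hy₂_le y hy.1 hle, hle⟩).not_gt hy.2
  refine ⟨sInf S, hstar_pos, hslack, fun c hc => ?_⟩
  by_contra! hc_slack
  have hwc : y₂ / 2 < c := by linarith
  obtain ⟨y₀, hy₀, hy₀min⟩ := isCompact_Icc.exists_isMinOn (nonempty_Icc.2 hwc.le)
    (hh.mono fun x hx => (half_pos hy₂).trans_le hx.1)
  have hy₀_bind : h y₀ ≤ 0 := (hy₀min ⟨by linarith, hc⟩).trans hstar.2
  have hwy₀ : y₂ / 2 < y₀ := hy₀.1.lt_of_ne fun heq =>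
    (hnear0 (y₂ / 2) ⟨half_pos hy₂, by linarith⟩).not_ge (heq ▸ hy₀_bind)
  have hy₀c : y₀ < c := hy₀.2.lt_of_ne fun heq => hc_slack.not_ge (heq ▸ hy₀_bind)
  exact hc_slack.not_ge <| hmin y₀ c ((half_pos hy₂).trans hwy₀) hy₀c
    (hy₀min.isLocalMin (Icc_mem_nhds hwy₀ hy₀c)) hy₀_bind

noncomputable def constraintBoundary (p k l y : ℝ) : ℝ := -(1 / k) * y ^ (1 / (p - 1)) + l / k

lemma constraintBoundary_rpow_sub_one {p k l x : ℝ} (hp : p ≠ 1) (hx : 0 < x) :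
    constraintBoundary p k l (x ^ (p - 1)) = -(1 / k) * x + l / k := by
  rw [constraintBoundary, ← rpow_mul hx.le, mul_one_div_cancel (sub_ne_zero.2 hp), rpow_one]

lemma hasDerivAt_constraintBoundary {p k l y : ℝ} (hy : 0 < y) :
    HasDerivAt (constraintBoundary p k l)
      (-(1 / k) * (1 / (p - 1) * y ^ (1 / (p - 1) - 1))) y :=
  ((hasDerivAt_rpow_const (Or.inl hy.ne')).const_mul _).add_const _

lemma hasDerivAt_deriv_constraintBoundary {p k y : ℝ} (hy : 0 < y) :
    HasDerivAt (fun x => -(1 / k) * (1 / (p - 1) * x ^ (1 / (p - 1) - 1)))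
      (-(1 / k) * (1 / (p - 1) * ((1 / (p - 1) - 1) * y ^ (1 / (p - 1) - 2)))) y :=
  (((hasDerivAt_rpow_const (Or.inl hy.ne')).const_mul _).const_mul _).congr_deriv
    (by ring_nf)

lemma mul_lt_sub_mul_rpow_of_constraintBoundary_lt {p k l r y A : ℝ} (hk : 0 < k) (hkr : k < r)
    (hslack : constraintBoundary p k l y < A) (hA : A < -(l / (r - k))) :
    l * r < (r - k) * y ^ (1 / (p - 1)) := by
  have hrk : 0 < r - k := by linarith
  have := mul_lt_mul_of_pos_left (hslack.trans hA) (mul_pos hk hrk)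
  simp only [constraintBoundary] at this
  field_simp at this
  linarith

noncomputable def dualOperator (β μ σ r : ℝ) (v : ℝ → ℝ) (y : ℝ) : ℝ :=
  β * (v y - y * deriv v y) - μ ^ 2 / (2 * σ ^ 2) * y ^ 2 * deriv (deriv v) y
    + r * y * deriv v y

lemma hasDerivAt_dualOperator {β μ σ r y C : ℝ} {v : ℝ → ℝ}
    (hv : HasDerivAt v (deriv v y) y) (hv' : HasDerivAt (deriv v) (deriv (deriv v) y) y)
    (hv'' : HasDerivAt (deriv (deriv v)) C y) :
    HasDerivAt (dualOperator β μ σ r v)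
      (r * deriv v y + (r - β) * y * deriv (deriv v) y
        - μ ^ 2 / (2 * σ ^ 2) * (2 * y * deriv (deriv v) y + y ^ 2 * C)) y :=
  ((((hv.sub ((hasDerivAt_id y).mul hv')).const_mul β).sub
    (((hasDerivAt_pow 2 y).const_mul (μ ^ 2 / (2 * σ ^ 2))).mul hv'')).add
    (((hasDerivAt_id y).const_mul r).mul hv')).congr_deriv (by simp; ring)

lemma sub_mul_rpow_le_mul_of_optimality {p β E r k l y A B C : ℝ} (hp1 : p < 1) (hE : 0 ≤ E)
    (hk : 0 < k) (hkr : k < r) (hy : 0 < y)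
    (hκr : r ≤ (β - p * (E / (1 - p) + r)) / (1 - p))
    (hB : k * B = -(1 / (p - 1) * y ^ (1 / (p - 1) - 1)))
    (hC : -(1 / (p - 1) * ((1 / (p - 1) - 1) * y ^ (1 / (p - 1) - 2))) ≤ k * C)
    (hA : k * A ≤ -y ^ (1 / (p - 1)) + l) (hu : (-k * A + l) ^ (p - 1) ≤ y)
    (hfoc : r * A + (r - β) * y * B - E * (2 * y * B + y ^ 2 * C)
      - (-k * B * (-k * A + l) ^ (p - 1) - (-k * B * y + (-k * A + l))) = 0) :
    (r - k) * y ^ (1 / (p - 1)) ≤ l * r := by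
  set s := 1 / (p - 1) with hs
  have hs_neg : s < 0 := one_div_neg.2 (by linarith)
  have hyt₁ : y * y ^ (s - 1) = y ^ s := by rw [rpow_sub_one hy.ne']; field_simp
  have hyt₂ : y ^ 2 * y ^ (s - 2) = y ^ s := by rw [rpow_sub hy, rpow_two]; field_simp
  have hcoef : r ≤ -(s * (β - r)) - 2 * E * s - E * s * (s - 1) + r := by
    have : p - 1 ≠ 0 := by linarith
    have : 1 - p ≠ 0 := by linarith
    convert hκr using 1
    rw [hs]
    field_simp
    ring
  have hkB : 0 ≤ k * B := by rw [hB]; nlinarith [rpow_pos_of_pos hy (s - 1)]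
  have hyB : y * (k * B) = -(s * y ^ s) := by rw [hB, ← hyt₁]; ring
  have hC' : E * (-(s * (s - 1)) * y ^ s) ≤ E * (y ^ 2 * (k * C)) := by
    rw [← hyt₂]
    nlinarith [mul_le_mul_of_nonneg_left hC (mul_nonneg hE (sq_nonneg y))]
  have hA' := mul_le_mul_of_nonneg_left hA (sub_pos.2 hkr).le
  have hu' := mul_le_mul_of_nonneg_left (mul_le_mul_of_nonneg_left hu hk.le) hkB
  have ht : 0 ≤ (-(s * (β - r)) - 2 * E * s - E * s * (s - 1)) * y ^ s :=
    mul_nonneg (by linarith) (rpow_pos_of_pos hy s).le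
  linear_combination -k * hfoc - (β - r + 2 * E) * hyB + hC' + hA' + hu' + ht

theorem sub_mul_rpow_le_mul_of_isLocalMin {p μ σ β r k l y₀ : ℝ} {v : ℝ → ℝ} (hp0 : 0 < p)
    (hp1 : p < 1) (hl : 0 ≤ l) (hk : 0 < k) (hkr : k < r)
    (hκr : r ≤ (β - p * (μ ^ 2 / (2 * σ ^ 2 * (1 - p)) + r)) / (1 - p))
    (hv : ContDiffOn ℝ 3 v (Ioi 0)) (hv' : ∀ y ∈ Ioi (0 : ℝ), deriv v y < -(l / (r - k)))
    (hODE : ∀ y ∈ Ioi (0 : ℝ), dualOperator β μ σ r v y = G p (-k * deriv v y + l) y)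
    (hy₀ : 0 < y₀) (hmin : IsLocalMin (fun y => deriv v y - constraintBoundary p k l y) y₀)
    (hbind : deriv v y₀ ≤ constraintBoundary p k l y₀) :
    (r - k) * y₀ ^ (1 / (p - 1)) ≤ l * r := by
  set s := 1 / (p - 1) with hs
  have hv₂ : ContDiffOn ℝ 2 (deriv v) (Ioi 0) := hv.deriv_of_isOpen isOpen_Ioi (by norm_num)
  have hv₃ : ContDiffOn ℝ 1 (deriv (deriv v)) (Ioi 0) :=
    hv₂.deriv_of_isOpen isOpen_Ioi (by norm_num)
  have hdv : ∀ y ∈ Ioi (0 : ℝ), HasDerivAt (deriv v) (deriv (deriv v) y) y := fun y hy =>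
    hv₂.hasDerivAt_deriv isOpen_Ioi (by norm_num) hy
  have hddv := hv₃.hasDerivAt_deriv isOpen_Ioi (by norm_num) hy₀
  set u := fun y => -k * deriv v y + l
  have hu_nonneg : ∀ y ∈ Ioi (0 : ℝ), 0 ≤ u y := by
    intro y hy
    have : k * (l / (r - k)) < -k * deriv v y := by nlinarith [hv' y hy]
    have : 0 ≤ k * (l / (r - k)) := mul_nonneg hk.le (div_nonneg hl (by linarith))
    simp only [u]
    linarith
  have hu₀ : y₀ ^ s ≤ u y₀ := by
    simp only [constraintBoundary, ← hs] at hbind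
    have := mul_le_mul_of_nonneg_left hbind hk.le
    simp only [u]
    field_simp at this
    linarith
  have hu₀_pos : 0 < u y₀ := (rpow_pos_of_pos hy₀ s).trans_le hu₀
  have hu₀_bind : u y₀ ^ (p - 1) ≤ y₀ := by
    calc u y₀ ^ (p - 1) ≤ (y₀ ^ s) ^ (p - 1) :=
          rpow_le_rpow_of_nonpos (rpow_pos_of_pos hy₀ s) hu₀ (by linarith)
      _ = y₀ := by rw [← rpow_mul hy₀.le, hs, one_div_mul_cancel (by linarith), rpow_one]
  -- `G (u y) y ≥ u y ^ p / p - u y * y` everywhere, with equality where the constraint binds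
  have hΘ : IsLocalMin (fun y => dualOperator β μ σ r v y - (u y ^ p / p - u y * y)) y₀ := by
    filter_upwards [isOpen_Ioi.mem_nhds hy₀] with y hy
    rw [hODE y hy, hODE y₀ hy₀, G_eq_of_rpow_sub_one_le hp0 hp1.le hu₀_pos hu₀_bind, sub_self]
    exact sub_nonneg.2 (le_G hp0 hp1 (hu_nonneg y hy) hy)
  have hfoc := hΘ.hasDerivAt_eq_zero <|
    (hasDerivAt_dualOperator (hv.hasDerivAt_deriv isOpen_Ioi (by norm_num) hy₀) (hdv y₀ hy₀)
      hddv).sub (hasDerivAt_rpow_div_sub_mul hp0.ne' (((hdv y₀ hy₀).const_mul (-k)).add_const l)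
        hu₀_pos)
  have hh : ∀ y ∈ Ioi (0 : ℝ), HasDerivAt (fun y => deriv v y - constraintBoundary p k l y)
      (deriv (deriv v) y - -(1 / k) * (s * y ^ (s - 1))) y := fun y hy =>
    (hdv y hy).sub (hasDerivAt_constraintBoundary hy)
  have hB := hmin.hasDerivAt_eq_zero (hh y₀ hy₀)
  have hC := hmin.hasDerivAt_hasDerivAt_nonneg (eventually_of_mem (isOpen_Ioi.mem_nhds hy₀) hh)
    (hddv.sub (hasDerivAt_deriv_constraintBoundary hy₀))
  refine sub_mul_rpow_le_mul_of_optimality hp1 (by positivity) hk hkr hy₀ (by rwa [div_div])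
    ?_ ?_ ?_ hu₀_bind hfoc
  · rw [sub_eq_zero.1 hB, hs]
    field_simp
  · have := mul_le_mul_of_nonneg_left (sub_nonneg.1 hC) hk.le
    field_simp at this ⊢
    linarith
  · simp only [u] at hu₀
    linarith

theorem stmt_11_general (p μ σ β r k l : ℝ) (hp0 : 0 < p) (hp1 : p < 1)
    (hl : 0 < l) (hk : 0 < k) (hkr : k < r)
    (hκr : r ≤ (β - p * (μ ^ 2 / (2 * σ ^ 2 * (1 - p)) + r)) / (1 - p))
    (v : ℝ → ℝ) (hv : ContDiffOn ℝ 3 v (Ioi 0))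
    (hv' : ∀ y ∈ Ioi (0 : ℝ), deriv v y < -(l / (r - k)))
    (hODE : ∀ y ∈ Ioi (0 : ℝ),
      β * (v y - y * deriv v y) - μ ^ 2 / (2 * σ ^ 2) * y ^ 2 * deriv (deriv v) y
        - G p (-k * deriv v y + l) y + r * y * deriv v y = 0)
    (y₂ : ℝ) (hy₂ : 0 < y₂)
    (hnear0 : ∀ y ∈ Ioo (0 : ℝ) y₂, -(1 / k) * y ^ (1 / (p - 1)) + l / k < deriv v y) :
    ∃ ystar : ℝ, 0 < ystar ∧
      (∀ y ∈ Ioo (0 : ℝ) ystar, -(1 / k) * y ^ (1 / (p - 1)) + l / k < deriv v y) ∧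
      (∀ y : ℝ, ystar ≤ y → deriv v y ≤ -(1 / k) * y ^ (1 / (p - 1)) + l / k) := by
  have hrk : 0 < r - k := by linarith
  have hODE' : ∀ y ∈ Ioi (0 : ℝ), dualOperator β μ σ r v y = G p (-k * deriv v y + l) y :=
    fun y hy => by rw [dualOperator]; linarith [hODE y hy]
  have hcont : ContinuousOn (fun y => deriv v y - constraintBoundary p k l y) (Ioi 0) :=
    (hv.continuousOn_deriv_of_isOpen isOpen_Ioi (by norm_num)).sub fun y hy =>
      (hasDerivAt_constraintBoundary hy).continuousAt.continuousWithinAt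
  -- at `Y = (l r / (r - k)) ^ (p - 1)` the boundary equals `-l / (r - k) > v' Y`
  have hlr : 0 < l * r / (r - k) := div_pos (mul_pos hl (hk.trans hkr)) hrk
  have hY : 0 < (l * r / (r - k)) ^ (p - 1) := rpow_pos_of_pos hlr _
  have hbinding : ∃ Y, 0 < Y ∧ deriv v Y - constraintBoundary p k l Y ≤ 0 := by
    refine ⟨_, hY, sub_nonpos.2 ((hv' _ hY).le.trans_eq ?_)⟩
    rw [constraintBoundary_rpow_sub_one hp1.ne hlr]
    field_simp
    ring
  obtain ⟨ystar, hstar, hslack, hbind⟩ := exists_threshold_of_isLocalMin hcont hy₂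
    (fun y hy => sub_pos.2 (hnear0 y hy)) hbinding fun y₀ c hy₀ hc hmin hle => by
      by_contra! hc_slack
      have h₀ := sub_mul_rpow_le_mul_of_isLocalMin hp0 hp1 hl.le hk hkr hκr hv hv' hODE' hy₀ hmin
        (sub_nonpos.1 hle)
      have hc₀ := mul_lt_sub_mul_rpow_of_constraintBoundary_lt hk hkr (sub_pos.1 hc_slack)
        (hv' c (hy₀.trans hc))
      have := rpow_lt_rpow_of_neg hy₀ hc (one_div_neg.2 (sub_neg.2 hp1))
      linarith [mul_lt_mul_of_pos_left this hrk]
  exact ⟨ystar, hstar, fun y hy => sub_pos.1 (hslack y hy), fun y hy => sub_nonpos.1 (hbind y hy)⟩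

/-- large discount factor case (`κ ≥ r`). For a `C³` solution `v` of the
dual ODE with `v'' > 0`, `v' < -l/(r-k)`, which near `0` satisfies the strict (slack)
inequality, there is a single threshold `y*` separating the slack region `(0,y*)` from
the binding region `[y*,∞)`. -/
theorem stmt_11 (p μ σ β r k l : ℝ) (hp0 : 0 < p) (hp1 : p < 1) (hμ : 0 < μ) (hσ : 0 < σ)
    (hβ : 0 < β) (hl : 0 < l) (hk : 0 < k) (hkr : k < r)
    (hκr : r ≤ (β - p * (μ ^ 2 / (2 * σ ^ 2 * (1 - p)) + r)) / (1 - p))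
    (v : ℝ → ℝ) (hv : ContDiffOn ℝ 3 v (Ioi 0))
    (hv'' : ∀ y ∈ Ioi (0 : ℝ), 0 < deriv (deriv v) y)
    (hv' : ∀ y ∈ Ioi (0 : ℝ), deriv v y < -(l / (r - k)))
    (hODE : ∀ y ∈ Ioi (0 : ℝ),
      β * (v y - y * deriv v y) - μ ^ 2 / (2 * σ ^ 2) * y ^ 2 * deriv (deriv v) y
        - G p (-k * deriv v y + l) y + r * y * deriv v y = 0)
    (y₂ : ℝ) (hy₂ : 0 < y₂)
    (hnear0 : ∀ y ∈ Ioo (0 : ℝ) y₂, -(1 / k) * y ^ (1 / (p - 1)) + l / k < deriv v y) :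
    ∃ ystar : ℝ, 0 < ystar ∧
      (∀ y ∈ Ioo (0 : ℝ) ystar, -(1 / k) * y ^ (1 / (p - 1)) + l / k < deriv v y) ∧
      (∀ y : ℝ, ystar ≤ y → deriv v y ≤ -(1 / k) * y ^ (1 / (p - 1)) + l / k) :=
  stmt_11_general p μ σ β r k l hp0 hp1 hl hk hkr hκr v hv hv' hODE y₂ hy₂ hnear0
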